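/- Let E be a real normed space, D ⊊ E a domain, and z₁, z₂ ∈ D. Then the quasihyperbolic distance satisfies k_D(z₁, z₂) ≥ log(1 + |z₁ - z₂| / min(dist(z₁, ∂D), dist(z₂, ∂D))). -/

import Mathlib

open Metric Set

variable {E : Type*} [NormedAddCommGroup E] [NormedSpace ℝ E]

/-- The quasihyperbolic length of a curve `γ : [0, L] → D` parametrized by
arc length (1-Lipschitz), in the domain `D`: `∫₀^L dt / dist(γ t, Dᶜ)`. -/
noncomputable def qhLength (D : Set E) (γ : ℝ → E) (L : ℝ) : ℝ :=
  ∫ t in (0:ℝ)..L, 1 / infDist (γ t) Dᶜ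

/-- `γ : [0, L] → D` is an admissible (rectifiable, arc-length parametrized)
curve joining `x` to `y` in `D`. -/
def IsQHPath (D : Set E) (x y : E) (γ : ℝ → E) (L : ℝ) : Prop :=
  0 ≤ L ∧ LipschitzOnWith 1 γ (Icc 0 L) ∧ γ 0 = x ∧ γ L = y ∧
    ∀ t ∈ Icc 0 L, γ t ∈ D

/-- The quasihyperbolic distance in the domain `D`: the infimum of
quasihyperbolic lengths of rectifiable curves joining `x` and `y` in `D`. -/
noncomputable def qhDist (D : Set E) (x y : E) : ℝ :=
  ⨅ p : {p : (ℝ → E) × ℝ // IsQHPath D x y p.1 p.2}, qhLength D p.1.1 p.1.2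

/-- The `j`-metric of the domain `D`. -/
noncomputable def jDist (D : Set E) (x y : E) : ℝ :=
  Real.log (1 + ‖x - y‖ / min (infDist x Dᶜ) (infDist y Dᶜ))

open scoped NNReal

/-!
Along a curve `γ` parametrized by arc length and starting at `x`, the distance to the boundary
grows at most linearly, `d(γ t) ≤ d(x) + t`, since `infDist` is 1-Lipschitz. Hence the
quasihyperbolic length of a curve of length `L ≥ ‖x - y‖` is at least
`∫₀^L dt / (d(x) + t) = log (1 + L / d(x)) ≥ log (1 + ‖x - y‖ / d(x))`. Running the curve
backwards gives the same bound with `d(y)`, hence with `min (d x) (d y)`. The infimum defining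
`qhDist` is over a nonempty family, since in an open connected set any two points are joined by a
chain of segments.
-/

theorem LipschitzOnWith.congr {α β : Type*} [PseudoEMetricSpace α] [PseudoEMetricSpace β]
    {f g : α → β} {K : ℝ≥0} {s : Set α} (hf : LipschitzOnWith K f s) (h : EqOn f g s) :
    LipschitzOnWith K g s := fun a ha b hb => by
  rw [← h ha, ← h hb]
  exact hf ha hb

theorem LipschitzOnWith.Icc_union_Icc {α : Type*} [PseudoMetricSpace α] {f : ℝ → α} {K : ℝ≥0}
    {a b c : ℝ} (h₁ : LipschitzOnWith K f (Icc a b)) (h₂ : LipschitzOnWith K f (Icc b c)) :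
    LipschitzOnWith K f (Icc a c) := by
  refine LipschitzOnWith.of_dist_le_mul fun s hs t ht => ?_
  wlog hst : s ≤ t generalizing s t
  · rw [dist_comm, dist_comm s]
    exact this t ht s hs (le_of_not_ge hst)
  rcases le_total t b with htb | hbt
  · exact h₁.dist_le_mul s ⟨hs.1, hst.trans htb⟩ t ⟨ht.1, htb⟩
  rcases le_total b s with hbs | hsb
  · exact h₂.dist_le_mul s ⟨hbs, hs.2⟩ t ⟨hbs.trans hst, ht.2⟩
  have hb₁ : b ∈ Icc a b := ⟨hs.1.trans hsb, le_rfl⟩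
  have hb₂ : b ∈ Icc b c := ⟨le_rfl, hbt.trans ht.2⟩
  calc dist (f s) (f t) ≤ dist (f s) (f b) + dist (f b) (f t) := dist_triangle _ _ _
    _ ≤ K * dist s b + K * dist b t :=
      add_le_add (h₁.dist_le_mul s ⟨hs.1, hsb⟩ b hb₁) (h₂.dist_le_mul b hb₂ t ⟨hbt, ht.2⟩)
    _ = K * dist s t := by
      rw [← mul_add, Real.dist_eq, Real.dist_eq, Real.dist_eq, abs_of_nonpos (by linarith),
        abs_of_nonpos (by linarith), abs_of_nonpos (by linarith)]
      ring

theorem integral_one_div_const_add {d L : ℝ} (hd : 0 < d) (hL : 0 ≤ L) :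
    ∫ t in (0 : ℝ)..L, 1 / (d + t) = Real.log (1 + L / d) := by
  rw [intervalIntegral.integral_comp_add_left (fun u => 1 / u) d, add_zero,
    integral_one_div_of_pos hd (by linarith), add_div, div_self hd.ne']

section

omit [NormedSpace ℝ E]

theorem qhLength_reverse (D : Set E) (γ : ℝ → E) (L : ℝ) :
    qhLength D (fun t => γ (L - t)) L = qhLength D γ L := by
  rw [qhLength, qhLength, intervalIntegral.integral_comp_sub_left (fun u => 1 / infDist (γ u) Dᶜ),
    sub_self, sub_zero]

namespace IsQHPath

variable {D : Set E} {x y z : E} {γ : ℝ → E} {L : ℝ}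

theorem norm_sub_le (h : IsQHPath D x y γ L) : ‖x - y‖ ≤ L := by
  obtain ⟨hL, hlip, rfl, rfl, -⟩ := h
  simpa [← dist_eq_norm, abs_of_nonneg hL] using
    hlip.dist_le_mul 0 (left_mem_Icc.2 hL) L (right_mem_Icc.2 hL)

theorem infDist_le_add (h : IsQHPath D x y γ L) (s : Set E) {t : ℝ} (ht : t ∈ Icc 0 L) :
    infDist (γ t) s ≤ infDist x s + t := by
  obtain ⟨hL, hlip, rfl, -, -⟩ := h
  have := hlip.dist_le_mul t ht 0 (left_mem_Icc.2 hL)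
  rw [NNReal.coe_one, one_mul, Real.dist_eq, sub_zero, abs_of_nonneg ht.1] at this
  linarith [infDist_le_infDist_add_dist (x := γ t) (y := γ 0) (s := s)]

theorem reverse (h : IsQHPath D x y γ L) : IsQHPath D y x (fun t => γ (L - t)) L := by
  obtain ⟨hL, hlip, h₀, h₁, hmem⟩ := h
  have hmaps : MapsTo (fun t => L - t) (Icc 0 L) (Icc 0 L) := fun t ht =>
    ⟨sub_nonneg.2 ht.2, sub_le_self L ht.1⟩
  refine ⟨hL, ?_, by simpa using h₁, by simpa using h₀, fun t ht => hmem _ (hmaps ht)⟩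
  refine LipschitzOnWith.of_dist_le_mul fun s hs t ht => ?_
  rw [← dist_sub_left L s t]
  exact hlip.dist_le_mul _ (hmaps hs) _ (hmaps ht)

theorem trans {γ' : ℝ → E} {L' : ℝ} (h : IsQHPath D x y γ L) (h' : IsQHPath D y z γ' L') :
    IsQHPath D x z (fun t => if t ≤ L then γ t else γ' (t - L)) (L + L') := by
  obtain ⟨hL, hlip, h₀, h₁, hmem⟩ := h
  obtain ⟨hL', hlip', h₀', h₁', hmem'⟩ := h'
  have hshift : MapsTo (fun t => t - L) (Icc L (L + L')) (Icc 0 L') := fun t ht =>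
    ⟨sub_nonneg.2 ht.1, by linarith [ht.2]⟩
  have hfirst : EqOn (fun t => if t ≤ L then γ t else γ' (t - L)) γ (Icc 0 L) :=
    fun t ht => if_pos ht.2
  have hsecond : EqOn (fun t => if t ≤ L then γ t else γ' (t - L)) (fun t => γ' (t - L))
      (Icc L (L + L')) := fun t ht => by
    rcases ht.1.eq_or_lt with rfl | hlt
    · simp [h₁, h₀']
    · simp [not_le.2 hlt]
  refine ⟨add_nonneg hL hL', ?_, by simp [hL, h₀], ?_, fun t ht => ?_⟩
  · refine LipschitzOnWith.Icc_union_Icc (b := L) (hlip.congr hfirst.symm) ?_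
    refine LipschitzOnWith.congr (LipschitzOnWith.of_dist_le_mul fun s hs t ht => ?_) hsecond.symm
    rw [← dist_sub_right s t L]
    exact hlip'.dist_le_mul _ (hshift hs) _ (hshift ht)
  · rw [hsecond ⟨le_add_of_nonneg_right hL', le_rfl⟩]
    simpa using h₁'
  · rcases le_total t L with htL | hLt
    · rw [hfirst ⟨ht.1, htL⟩]
      exact hmem t ⟨ht.1, htL⟩
    · rw [hsecond ⟨hLt, ht.2⟩]
      exact hmem' _ (hshift ⟨hLt, ht.2⟩)

theorem log_le_qhLength (h : IsQHPath D x y γ L) (hD : IsOpen D) (hne : D ≠ univ) :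
    Real.log (1 + ‖x - y‖ / infDist x Dᶜ) ≤ qhLength D γ L := by
  obtain ⟨hL, hlip, hγ₀, -, hmem⟩ := id h
  have hpos : ∀ t ∈ Icc 0 L, 0 < infDist (γ t) Dᶜ := fun t ht =>
    (hD.isClosed_compl.notMem_iff_infDist_pos (nonempty_compl.2 hne)).1
      (not_not_intro (hmem t ht))
  have hd : 0 < infDist x Dᶜ := hγ₀ ▸ hpos 0 (left_mem_Icc.2 hL)
  have hcont : ContinuousOn (fun t => infDist (γ t) Dᶜ) (Icc 0 L) :=
    (continuous_infDist_pt _).comp_continuousOn hlip.continuousOn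
  calc Real.log (1 + ‖x - y‖ / infDist x Dᶜ) ≤ Real.log (1 + L / infDist x Dᶜ) := by
        gcongr
        exact h.norm_sub_le
    _ = ∫ t in (0 : ℝ)..L, 1 / (infDist x Dᶜ + t) := (integral_one_div_const_add hd hL).symm
    _ ≤ qhLength D γ L := by
      refine intervalIntegral.integral_mono_on hL ?_ ?_
        fun t ht => one_div_le_one_div_of_le (hpos t ht) (h.infDist_le_add _ ht)
      · refine ContinuousOn.intervalIntegrable ?_
        rw [uIcc_of_le hL]
        exact continuousOn_const.div (continuousOn_const.add continuousOn_id)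
          fun t ht => (add_pos_of_pos_of_nonneg hd ht.1).ne'
      · refine ContinuousOn.intervalIntegrable ?_
        rw [uIcc_of_le hL]
        exact continuousOn_const.div hcont fun t ht => (hpos t ht).ne'

theorem jDist_le_qhLength (h : IsQHPath D x y γ L) (hD : IsOpen D) (hne : D ≠ univ) :
    jDist D x y ≤ qhLength D γ L := by
  rcases le_total (infDist x Dᶜ) (infDist y Dᶜ) with hxy | hyx
  · rw [jDist, min_eq_left hxy]
    exact h.log_le_qhLength hD hne
  · rw [jDist, min_eq_right hyx, norm_sub_rev, ← qhLength_reverse]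
    exact h.reverse.log_le_qhLength hD hne

end IsQHPath

end

theorem isQHPath_segment {D : Set E} {x y : E} (h : segment ℝ x y ⊆ D) :
    IsQHPath D x y (fun t => x + (t / ‖y - x‖) • (y - x)) ‖y - x‖ := by
  have hmaps : ∀ t ∈ Icc 0 ‖y - x‖, t / ‖y - x‖ ∈ Icc (0 : ℝ) 1 := fun t ht =>
    ⟨div_nonneg ht.1 (norm_nonneg _), div_le_one_of_le₀ ht.2 (norm_nonneg _)⟩
  refine ⟨norm_nonneg _, LipschitzOnWith.of_dist_le_mul fun s _ t _ => ?_, by simp, ?_,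
    fun t ht => h ?_⟩
  · rw [dist_add_left, dist_eq_norm, dist_eq_norm s t, ← sub_smul, ← sub_div, norm_smul, norm_div,
      norm_norm, NNReal.coe_one, one_mul, div_mul_comm]
    exact mul_le_of_le_one_left (norm_nonneg _) (div_self_le_one _)
  · rcases eq_or_ne y x with rfl | hyx
    · simp
    · beta_reduce
      rw [div_self (norm_ne_zero_iff.2 (sub_ne_zero.2 hyx)), one_smul, add_sub_cancel]
  · rw [segment_eq_image']
    exact ⟨_, hmaps t ht, rfl⟩

theorem exists_isQHPath_of_isPreconnected {D : Set E} (hD : IsOpen D) (hconn : IsPreconnected D)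
    {x y : E} (hx : x ∈ D) (hy : y ∈ D) : ∃ γ L, IsQHPath D x y γ L := by
  refine hconn.induction₂ (fun x y => ∃ γ L, IsQHPath D x y γ L) (fun x hx => ?_)
    (fun _ _ _ _ _ _ ⟨_, _, h⟩ ⟨_, _, h'⟩ => ⟨_, _, h.trans h'⟩)
    (fun _ _ _ _ ⟨_, _, h⟩ => ⟨_, _, h.reverse⟩) hx hy
  obtain ⟨ε, hε, hball⟩ := Metric.isOpen_iff.1 hD x hx
  filter_upwards [nhdsWithin_le_nhds (ball_mem_nhds x hε)] with y hy
  exact ⟨_, _, isQHPath_segment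
    (((convex_ball x ε).segment_subset (mem_ball_self hε) hy).trans hball)⟩

theorem stmt_6 (D : Set E) (hD : IsOpen D) (hconn : IsConnected D)
    (hne : D ≠ univ) (z₁ z₂ : E) (hz₁ : z₁ ∈ D) (hz₂ : z₂ ∈ D) :
    Real.log (1 + ‖z₁ - z₂‖ / min (infDist z₁ Dᶜ) (infDist z₂ Dᶜ)) ≤
      qhDist D z₁ z₂ := by
  obtain ⟨γ, L, hγ⟩ := exists_isQHPath_of_isPreconnected hD hconn.isPreconnected hz₁ hz₂
  have : Nonempty {p : (ℝ → E) × ℝ // IsQHPath D z₁ z₂ p.1 p.2} := ⟨⟨(γ, L), hγ⟩⟩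
  exact le_ciInf fun p => p.2.jDist_le_qhLength hD hne
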